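/- For every real γ > 0, 1 − (1/(4γ⁴)) · ∫₀^∞ (1 − exp(−x₂)) · x₂ · exp(−x₂²/(4γ²)) · ( ∫₀^{x₂} (1 − exp(−x₁)) · x₁ dx₁ ) dx₂ = (1/γ) · [ γ³ − W(γ)·(2γ⁴ + 5γ² − 1) + W(2γ)·(8γ² − 1) ]. -/

import Mathlib

/-!
After evaluating the inner integral, the integrand is `∑ₖ qₖ(x) exp (-x² / (4γ²) - k x)` over
`k = 0, 1, 2` with cubic `qₖ`. Each term has an explicit primitive: a quadratic times the same
weight, plus a multiple of the Gaussian tail `∫_{x/(2γ)+kγ}^∞ exp (-t²) dt` obtained by completing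
the square. The primitive vanishes at infinity, and at `0` the tails for `k = 1, 2` are `W γ`
and `W (2γ)` up to the factors `exp (γ²)` and `exp (4γ²)`.
-/

open MeasureTheory Real

/-- `W x = exp (x²) · ∫_x^∞ exp (−t²) dt`, i.e. `(√π/2)·erfcx x`. -/
noncomputable def W (x : ℝ) : ℝ := Real.exp (x ^ 2) * ∫ t in Set.Ioi x, Real.exp (-(t ^ 2))

open Filter Set Topology

section TailIntegral

variable {E : Type*} [NormedAddCommGroup E] [NormedSpace ℝ E] {f : ℝ → E}

lemma setIntegral_Ioi_eq_sub_intervalIntegral (hf : Integrable f) (y : ℝ) :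
    ∫ t in Ioi y, f t = (∫ t in Ioi 0, f t) - ∫ t in (0 : ℝ)..y, f t := by
  rw [← intervalIntegral.integral_Ioi_sub_Ioi' hf.integrableOn hf.integrableOn, sub_sub_cancel]

lemma hasDerivAt_setIntegral_Ioi [CompleteSpace E] (hf : Integrable f) (hc : Continuous f)
    (y : ℝ) :
    HasDerivAt (fun y => ∫ t in Ioi y, f t) (-f y) y := by
  rw [funext (setIntegral_Ioi_eq_sub_intervalIntegral hf)]
  exact (intervalIntegral.integral_hasDerivAt_right hf.intervalIntegrable
    (hc.stronglyMeasurableAtFilter _ _) hc.continuousAt).const_sub _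

lemma tendsto_setIntegral_Ioi_atTop (hf : Integrable f) :
    Tendsto (fun y => ∫ t in Ioi y, f t) atTop (𝓝 0) := by
  rw [funext (setIntegral_Ioi_eq_sub_intervalIntegral hf)]
  simpa using (tendsto_const_nhds (x := ∫ t in Ioi 0, f t)).sub
    (intervalIntegral_tendsto_integral_Ioi 0 hf.integrableOn tendsto_id)

end TailIntegral

lemma integrable_exp_neg_sq : Integrable fun t : ℝ => exp (-(t ^ 2)) := by
  simpa using integrable_exp_neg_mul_sq one_pos

noncomputable def shiftedGaussian (γ k x : ℝ) : ℝ := exp (-(x ^ 2) / (4 * γ ^ 2) - k * x)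

/-- Completing the square, `x² / (4γ²) + k x = (x / (2γ) + kγ)² - (kγ)²`, so this is a primitive
of `shiftedGaussian γ k` up to the factor `-2γ`. -/
noncomputable def shiftedGaussianTail (γ k x : ℝ) : ℝ :=
  exp ((k * γ) ^ 2) * ∫ t in Ioi (x / (2 * γ) + k * γ), exp (-(t ^ 2))

section ShiftedGaussian

variable {γ : ℝ}

lemma shiftedGaussian_eq (hγ : γ ≠ 0) (k x : ℝ) :
    shiftedGaussian γ k x = exp ((k * γ) ^ 2) * exp (-(x / (2 * γ) + k * γ) ^ 2) := by
  rw [shiftedGaussian, ← exp_add]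
  congr 1
  field_simp
  ring

lemma hasDerivAt_shiftedGaussian (k x : ℝ) :
    HasDerivAt (shiftedGaussian γ k) (-(x / (2 * γ ^ 2) + k) * shiftedGaussian γ k x) x := by
  have h := ((((hasDerivAt_pow 2 x).neg).div_const (4 * γ ^ 2)).sub
    ((hasDerivAt_id x).const_mul k)).exp
  refine h.congr_deriv ?_
  rw [shiftedGaussian, mul_comm]
  congr 1
  field_simp
  ring

lemma hasDerivAt_shiftedGaussianTail (hγ : γ ≠ 0) (k x : ℝ) :
    HasDerivAt (shiftedGaussianTail γ k) (-shiftedGaussian γ k x / (2 * γ)) x := by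
  have hu : HasDerivAt (fun x => x / (2 * γ) + k * γ) (1 / (2 * γ)) x := by
    simpa using ((hasDerivAt_id x).div_const (2 * γ)).add_const (k * γ)
  have h := ((hasDerivAt_setIntegral_Ioi integrable_exp_neg_sq (by fun_prop) _).comp x
    hu).const_mul (exp ((k * γ) ^ 2))
  refine h.congr_deriv ?_
  rw [shiftedGaussian_eq hγ]
  ring

lemma shiftedGaussianTail_zero (γ k : ℝ) : shiftedGaussianTail γ k 0 = W (k * γ) := by
  simp [shiftedGaussianTail, W]

lemma tendsto_shiftedGaussianTail_atTop (hγ : 0 < γ) (k : ℝ) :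
    Tendsto (shiftedGaussianTail γ k) atTop (𝓝 0) := by
  have hu : Tendsto (fun x => x / (2 * γ) + k * γ) atTop atTop :=
    tendsto_atTop_add_const_right _ _ (tendsto_id.atTop_div_const (by positivity))
  unfold shiftedGaussianTail
  simpa using ((tendsto_setIntegral_Ioi_atTop integrable_exp_neg_sq).comp hu).const_mul
    (exp ((k * γ) ^ 2))

lemma tendsto_pow_mul_shiftedGaussian_atTop (hγ : γ ≠ 0) {k : ℝ} (hk : 0 ≤ k) (n : ℕ) :
    Tendsto (fun x => x ^ n * shiftedGaussian γ k x) atTop (𝓝 0) := by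
  have hgauss :
      Tendsto (fun x : ℝ => x ^ n * exp (-(1 / (4 * γ ^ 2)) * x ^ 2)) atTop (𝓝 0) := by
    have := (tendsto_rpow_abs_mul_exp_neg_mul_sq_cocompact (a := 1 / (4 * γ ^ 2)) (by positivity)
      n).mono_left atTop_le_cocompact
    refine this.congr' ?_
    filter_upwards [eventually_ge_atTop 0] with x hx
    rw [abs_of_nonneg hx, rpow_natCast]
  refine squeeze_zero' ?_ ?_ hgauss
  · filter_upwards [eventually_ge_atTop 0] with x hx
    exact mul_nonneg (pow_nonneg hx n) (exp_pos _).le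
  · filter_upwards [eventually_ge_atTop 0] with x hx
    refine mul_le_mul_of_nonneg_left (exp_le_exp.mpr ?_) (pow_nonneg hx n)
    have : -(x ^ 2) / (4 * γ ^ 2) = -(1 / (4 * γ ^ 2)) * x ^ 2 := by ring
    linarith [mul_nonneg hk hx]

lemma hasDerivAt_quadratic_mul_shiftedGaussian (a b c k x : ℝ) :
    HasDerivAt (fun x => (a * x ^ 2 + b * x + c) * shiftedGaussian γ k x)
      ((2 * a * x + b - (x / (2 * γ ^ 2) + k) * (a * x ^ 2 + b * x + c)) *
        shiftedGaussian γ k x) x := by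
  have hq : HasDerivAt (fun x => a * x ^ 2 + b * x + c) (2 * a * x + b) x := by
    have := (((hasDerivAt_pow 2 x).const_mul a).add ((hasDerivAt_id x).const_mul b)).add_const c
    exact this.congr_deriv (by simp; ring)
  exact (hq.mul (hasDerivAt_shiftedGaussian k x)).congr_deriv (by ring)

lemma tendsto_quadratic_mul_shiftedGaussian_atTop (hγ : γ ≠ 0) {k : ℝ} (hk : 0 ≤ k)
    (a b c : ℝ) :
    Tendsto (fun x => (a * x ^ 2 + b * x + c) * shiftedGaussian γ k x) atTop (𝓝 0) := by
  have h := (((tendsto_pow_mul_shiftedGaussian_atTop hγ hk 2).const_mul a).add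
    ((tendsto_pow_mul_shiftedGaussian_atTop hγ hk 1).const_mul b)).add
    ((tendsto_pow_mul_shiftedGaussian_atTop hγ hk 0).const_mul c)
  simp only [mul_zero, add_zero] at h
  exact h.congr fun x => by ring

end ShiftedGaussian

lemma integral_one_sub_exp_neg_mul_self (y : ℝ) :
    ∫ t in (0 : ℝ)..y, (1 - exp (-t)) * t = y ^ 2 / 2 - 1 + exp (-y) * (y + 1) := by
  have h : ∀ t ∈ uIcc (0 : ℝ) y,
      HasDerivAt (fun s => s ^ 2 / 2 + exp (-s) * (s + 1)) ((1 - exp (-t)) * t) t := by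
    intro t _
    have := ((hasDerivAt_pow 2 t).div_const 2).add
      (((hasDerivAt_id t).neg.exp).mul ((hasDerivAt_id t).add_const 1))
    exact this.congr_deriv (by simp; ring)
  rw [intervalIntegral.integral_eq_sub_of_hasDerivAt h
    ((by fun_prop : Continuous _).intervalIntegrable _ _)]
  simp only [neg_zero, exp_zero]
  ring

lemma reliabilityIntegrand_nonneg (γ : ℝ) {x : ℝ} (hx : 0 ≤ x) :
    0 ≤ (1 - exp (-x)) * x * exp (-(x ^ 2) / (4 * γ ^ 2)) *
      ∫ x₁ in (0 : ℝ)..x, (1 - exp (-x₁)) * x₁ := by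
  have one_sub_exp_nonneg : ∀ t : ℝ, 0 ≤ t → 0 ≤ 1 - exp (-t) := fun t ht => by
    simpa using exp_le_one_iff.mpr (neg_nonpos.mpr ht)
  refine mul_nonneg (by positivity [one_sub_exp_nonneg x hx]) ?_
  exact intervalIntegral.integral_nonneg hx fun t ht =>
    mul_nonneg (one_sub_exp_nonneg t ht.1) ht.1

lemma reliabilityIntegrand_eq (γ x : ℝ) :
    (1 - exp (-x)) * x * exp (-(x ^ 2) / (4 * γ ^ 2)) * (x ^ 2 / 2 - 1 + exp (-x) * (x + 1)) =
      (x ^ 3 / 2 - x) * shiftedGaussian γ 0 x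
        + (-x ^ 3 / 2 + x ^ 2 + 2 * x) * shiftedGaussian γ 1 x
        - (x ^ 2 + x) * shiftedGaussian γ 2 x := by
  simp only [shiftedGaussian, exp_sub, zero_mul, exp_zero, div_one, one_mul, exp_neg,
    show exp (2 * x) = exp x ^ 2 by rw [← exp_nat_mul]; norm_num]
  field_simp
  ring

/-- The `k`-th summand differentiates to the `k`-th term of `reliabilityIntegrand_eq`: the
quadratic factor matches the cubic coefficients, and the multiple of `shiftedGaussianTail γ k`
cancels the constant left over. -/
noncomputable def reliabilityPrimitive (γ x : ℝ) : ℝ :=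
  (-γ ^ 2 * x ^ 2 + (2 * γ ^ 2 - 4 * γ ^ 4)) * shiftedGaussian γ 0 x
  + ((γ ^ 2 * x ^ 2 - (2 * γ ^ 4 + 2 * γ ^ 2) * x + (4 * γ ^ 6 + 8 * γ ^ 4 - 4 * γ ^ 2)) *
        shiftedGaussian γ 1 x
      + (-8 * γ ^ 7 - 20 * γ ^ 5 + 4 * γ ^ 3) * shiftedGaussianTail γ 1 x)
  + ((2 * γ ^ 2 * x + (2 * γ ^ 2 - 8 * γ ^ 4)) * shiftedGaussian γ 2 x
      + (32 * γ ^ 5 - 4 * γ ^ 3) * shiftedGaussianTail γ 2 x)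

section ReliabilityPrimitive

variable {γ : ℝ}

lemma hasDerivAt_reliabilityPrimitive (hγ : γ ≠ 0) (x : ℝ) :
    HasDerivAt (reliabilityPrimitive γ)
      ((1 - exp (-x)) * x * exp (-(x ^ 2) / (4 * γ ^ 2)) *
        ∫ x₁ in (0 : ℝ)..x, (1 - exp (-x₁)) * x₁) x := by
  rw [integral_one_sub_exp_neg_mul_self, reliabilityIntegrand_eq]
  have h0 := hasDerivAt_quadratic_mul_shiftedGaussian (γ := γ) (-γ ^ 2) 0
    (2 * γ ^ 2 - 4 * γ ^ 4) 0 x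
  have h1 := hasDerivAt_quadratic_mul_shiftedGaussian (γ := γ) (γ ^ 2) (-(2 * γ ^ 4 + 2 * γ ^ 2))
    (4 * γ ^ 6 + 8 * γ ^ 4 - 4 * γ ^ 2) 1 x
  have h2 := hasDerivAt_quadratic_mul_shiftedGaussian (γ := γ) 0 (2 * γ ^ 2)
    (2 * γ ^ 2 - 8 * γ ^ 4) 2 x
  have t1 := (hasDerivAt_shiftedGaussianTail hγ 1 x).const_mul
    (-8 * γ ^ 7 - 20 * γ ^ 5 + 4 * γ ^ 3)
  have t2 := (hasDerivAt_shiftedGaussianTail hγ 2 x).const_mul (32 * γ ^ 5 - 4 * γ ^ 3)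
  have h := (h0.add (h1.add t1)).add (h2.add t2)
  refine (h.congr_of_eventuallyEq (Eventually.of_forall fun y => ?_)).congr_deriv ?_
  · simp only [reliabilityPrimitive, Pi.add_apply]
    ring
  field_simp
  ring

lemma tendsto_reliabilityPrimitive_atTop (hγ : 0 < γ) :
    Tendsto (reliabilityPrimitive γ) atTop (𝓝 0) := by
  have q k (hk : 0 ≤ k) a b c := tendsto_quadratic_mul_shiftedGaussian_atTop hγ.ne' hk a b c
  have tail k c := (tendsto_shiftedGaussianTail_atTop hγ k).const_mul c
  have h := ((q 0 le_rfl (-γ ^ 2) 0 (2 * γ ^ 2 - 4 * γ ^ 4)).add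
    ((q 1 zero_le_one (γ ^ 2) (-(2 * γ ^ 4 + 2 * γ ^ 2)) (4 * γ ^ 6 + 8 * γ ^ 4 - 4 * γ ^ 2)).add
      (tail 1 (-8 * γ ^ 7 - 20 * γ ^ 5 + 4 * γ ^ 3)))).add
    ((q 2 zero_le_two 0 (2 * γ ^ 2) (2 * γ ^ 2 - 8 * γ ^ 4)).add
      (tail 2 (32 * γ ^ 5 - 4 * γ ^ 3)))
  simp only [mul_zero, add_zero] at h
  exact h.congr fun x => by unfold reliabilityPrimitive; ring

lemma reliabilityPrimitive_zero (γ : ℝ) :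
    reliabilityPrimitive γ 0 = 4 * γ ^ 6 - 4 * γ ^ 4
      - 4 * γ ^ 3 * (2 * γ ^ 4 + 5 * γ ^ 2 - 1) * W γ
      + 4 * γ ^ 3 * (8 * γ ^ 2 - 1) * W (2 * γ) := by
  simp only [reliabilityPrimitive, shiftedGaussianTail_zero, shiftedGaussian]
  norm_num
  ring

end ReliabilityPrimitive

theorem reliability_independent_second_order (γ : ℝ) (hγ : 0 < γ) :
    1 - (1 / (4 * γ ^ 4)) *
      ∫ x₂ in Set.Ioi (0 : ℝ),
        (1 - Real.exp (-x₂)) * x₂ * Real.exp (-(x₂ ^ 2) / (4 * γ ^ 2)) *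
          ∫ x₁ in (0 : ℝ)..x₂, (1 - Real.exp (-x₁)) * x₁
      = (1 / γ) * (γ ^ 3 - W γ * (2 * γ ^ 4 + 5 * γ ^ 2 - 1)
          + W (2 * γ) * (8 * γ ^ 2 - 1)) := by
  rw [integral_Ioi_of_hasDerivAt_of_nonneg' (fun x _ => hasDerivAt_reliabilityPrimitive hγ.ne' x)
    (fun x hx => reliabilityIntegrand_nonneg γ (le_of_lt hx))
    (tendsto_reliabilityPrimitive_atTop hγ), reliabilityPrimitive_zero]
  field_simp
  ring
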